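/- arXiv:1811.08336 — 2 statements merged into one kernel-verified Lean document; each statement's English description precedes it below -/
import Mathlib

section
/- Fix 1 ≤ n ≤ L and 0 ≤ k ≤ n−1 for the two fixed connected components. The monomial y^k v_{n−k} appears in s_n^{(2k+1)} with coefficient b̃_{n−k} ∏_{j=0}^{k−1} a_{n−j} c_{n−j} (the empty product for k=0 being 1); moreover, no monomial of the form y^r v_{n−k} with r ≥ 0 appears in s_n^{(ℓ)} for any ℓ < 2k+1, and y^k v_{n−k} is the only monomial of the form y^r v_{n−k} appearing in s_n^{(2k+1)}. -/
/-!
Every monomial of `lieD (N.rhs k) φ` comes from a monomial of `φ` by replacing one species taking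
part in a reaction by the reactant complex of that reaction. Measure a species `z` by its depth on
the chain `s_0, …, s_L` of the first component (`j` for `s_j`, `0` off the chain, and for an
intermediate the largest depth in its block). Starting from `s_n`, descending one level of the chain
(`s_j → u_j → y s_{j-1}`) takes two derivatives and releases one enzyme `y`, so by induction on `ℓ`
the monomial `y^r z` is absent from `s_n^{(ℓ)}` unless `r ≥ n - depth z` and
`ℓ ≥ r + n - depth z`, with one more step if `z` is an intermediate (`OutOfReach`). Assumption 2
keeps `y` off the chain, and a component in which `y` is a substrate shares no substrate with the
chain; Assumption 1 makes `y + s_j` a complex of the first component only. For `v_{n-k}`, of depth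
`n - k`, this leaves exactly one way to produce `y^k v_{n-k}` in `2k + 1` steps,
`s_n → u_n → y s_{n-1} → ⋯ → y^k s_{n-k} → y^k v_{n-k}`, with weight
`c_n a_n ⋯ c_{n-k+1} a_{n-k+1} · b̃_{n-k}`.
-/

open MvPolynomial Finsupp

variable {σ : Type*}

/-- The total (Lie) derivative of a polynomial `φ` associated to the polynomial vector
field `f`: `φ̇ = Σ_x (∂φ/∂x)·f x`. -/
noncomputable def lieD [Fintype σ] (f : σ → MvPolynomial σ ℝ)
    (φ : MvPolynomial σ ℝ) : MvPolynomial σ ℝ :=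
  ∑ x : σ, MvPolynomial.pderiv x φ * f x

/-- Iterated total (Lie) derivative. -/
noncomputable def lieDIter [Fintype σ] (f : σ → MvPolynomial σ ℝ) :
    ℕ → MvPolynomial σ ℝ → MvPolynomial σ ℝ
  | 0, φ => φ
  | n + 1, φ => lieD f (lieDIter f n φ)

/-- Indicator of a species inside a complex, as a real number. -/
def ind [DecidableEq σ] (a x : σ) : ℝ := if a = x then 1 else 0

/-- A chemical reaction network of the structural form of Assumption 1: the connected
components are indexed by `ι`; component `i` is
`Y i + S i 0 ⇄ U i 1 → Y i + S i 1 ⇄ U i 2 → ⋯ ⇄ U i (L i) → Y i + S i (L i)`,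
with rate constants `a_{i,j}, b_{i,j}, c_{i,j}` for the reactions
`Y i + S i (j-1) → U i j`, `U i j → Y i + S i (j-1)`, `U i j → Y i + S i j`
(`1 ≤ j ≤ L i`). Only the values `S i j` for `j ≤ L i` and `U i j` for
`1 ≤ j ≤ L i` are relevant. -/
structure A1Network (σ : Type*) where
  ι : Type
  [fintypeι : Fintype ι]
  L : ι → ℕ
  Lpos : ∀ i, 1 ≤ L i
  Y : ι → σ
  S : ι → ℕ → σ
  U : ι → ℕ → σ

attribute [instance] A1Network.fintypeι

namespace A1Network

variable [Fintype σ] [DecidableEq σ]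

/-- Rate-constant index: component `i`, block `j+1` (for `j : Fin (L i)`), and
`0, 1, 2` for the constants `a, b, c` of the block. -/
def Param (N : A1Network σ) : Type := (i : N.ι) × Fin (N.L i) × Fin 3

instance (N : A1Network σ) : Fintype N.Param :=
  inferInstanceAs (Fintype ((i : N.ι) × Fin (N.L i) × Fin 3))

/-- `x` is an intermediate species of the network. -/
def inter (N : A1Network σ) (x : σ) : Prop :=
  ∃ i, ∃ j : Fin (N.L i), x = N.U i ((j : ℕ) + 1)

/-- The non-intermediate `x₁` reacts with the non-intermediate `x₂`
(a reaction `x₁ + x₂ → U` exists). -/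
def reactsWith (N : A1Network σ) (x₁ x₂ : σ) : Prop :=
  ∃ i, ∃ j : Fin (N.L i),
    (x₁ = N.Y i ∧ x₂ = N.S i (j : ℕ)) ∨ (x₂ = N.Y i ∧ x₁ = N.S i (j : ℕ))

/-- The intermediate `u` reacts to the non-intermediate `x`
(a reaction `u → x + X₂` exists). -/
def reactsTo (N : A1Network σ) (u x : σ) : Prop :=
  ∃ i, ∃ j : Fin (N.L i), u = N.U i ((j : ℕ) + 1) ∧
    (x = N.Y i ∨ x = N.S i (j : ℕ) ∨ x = N.S i ((j : ℕ) + 1))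

/-- The distinctness/uniqueness requirements of Assumption 1: the intermediates of the
entire network are pairwise distinct and distinct from all non-intermediates; the
non-intermediates of one component are pairwise distinct; each complex lies in a
unique connected component. -/
structure Assumption1 (N : A1Network σ) : Prop where
  U_inj : ∀ i (j : Fin (N.L i)) i' (j' : Fin (N.L i')),
    N.U i ((j : ℕ) + 1) = N.U i' ((j' : ℕ) + 1) → i = i' ∧ (j : ℕ) = (j' : ℕ)
  U_ne_Y : ∀ i (j : Fin (N.L i)) i', N.U i ((j : ℕ) + 1) ≠ N.Y i'
  U_ne_S : ∀ i (j : Fin (N.L i)) i' j', j' ≤ N.L i' → N.U i ((j : ℕ) + 1) ≠ N.S i' j'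
  S_inj : ∀ i j j', j ≤ N.L i → j' ≤ N.L i → N.S i j = N.S i j' → j = j'
  complex_unique : ∀ i i' j j', j ≤ N.L i → j' ≤ N.L i' →
    (∀ x : σ, ind (N.Y i) x + ind (N.S i j) x = ind (N.Y i') x + ind (N.S i' j') x) →
    i = i'

/-- `part` is a partition of the species as in Assumption 2: intermediates form class `0`;
all the substrates and products of a component lie in one class `α ≥ 1` which contains
neither the enzyme of the component nor any intermediate. -/
def IsPartition (N : A1Network σ) (part : σ → ℕ) : Prop :=
  (∀ x, N.inter x → part x = 0) ∧
  (∀ i : N.ι, ∃ α, 1 ≤ α ∧ (∀ j, j ≤ N.L i → part (N.S i j) = α) ∧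
    part (N.Y i) ≠ α ∧ part (N.Y i) ≠ 0)

/-- Assumption 2: there exists a partition as above. -/
def Assumption2 (N : A1Network σ) : Prop := ∃ part, N.IsPartition part

/-- The mass-action right-hand side of the induced dynamical system:
`ẋ = Σ_{y→y'} k_{yy'} x^y (y'-y)`. -/
noncomputable def rhs (N : A1Network σ) (k : N.Param → ℝ) (x : σ) : MvPolynomial σ ℝ :=
  ∑ i : N.ι, ∑ j : Fin (N.L i),
    (C (k ⟨i, j, 0⟩ *
          (ind (N.U i ((j : ℕ) + 1)) x - ind (N.Y i) x - ind (N.S i (j : ℕ)) x)) *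
        (X (N.Y i) * X (N.S i (j : ℕ)))
      + C (k ⟨i, j, 1⟩ *
          (ind (N.Y i) x + ind (N.S i (j : ℕ)) x - ind (N.U i ((j : ℕ) + 1)) x)) *
        X (N.U i ((j : ℕ) + 1))
      + C (k ⟨i, j, 2⟩ *
          (ind (N.Y i) x + ind (N.S i ((j : ℕ) + 1)) x - ind (N.U i ((j : ℕ) + 1)) x)) *
        X (N.U i ((j : ℕ) + 1)))

/-- `x^{(ℓ)}(x, k)`: the `ℓ`-th iterated total derivative of the variable `x`. -/
noncomputable def deriv (N : A1Network σ) (k : N.Param → ℝ) (ℓ : ℕ) (x : σ) :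
    MvPolynomial σ ℝ :=
  lieDIter (N.rhs k) ℓ (X x)

/-- The map `ψ` on rate constants is identifiable from the set of variables `T` with `D`
derivatives: whenever two positive rate vectors give the same derivatives
`x^{(ℓ)}`, `1 ≤ ℓ ≤ D`, `x ∈ T`, as polynomials, the values of `ψ` agree. -/
def IdentifiableFrom {α : Type*} (N : A1Network σ) (ψ : (N.Param → ℝ) → α)
    (T : Set σ) (D : ℕ) : Prop :=
  ∀ k₁ k₂ : N.Param → ℝ, (∀ r, 0 < k₁ r) → (∀ r, 0 < k₂ r) →
    (∀ x ∈ T, ∀ ℓ, 1 ≤ ℓ → ℓ ≤ D → N.deriv k₁ ℓ x = N.deriv k₂ ℓ x) →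
    ψ k₁ = ψ k₂

end A1Network

namespace Finsupp

variable {a b u y z : σ} {r t : ℕ}

theorem eq_of_single_le_single_add_single (hu : u ≠ y)
    (h : single u 1 ≤ single y r + single z 1) : u = z := by
  classical
  by_contra huz
  simpa [single_apply, hu.symm, Ne.symm huz] using single_le_iff.mp h

theorem not_single_le_single_of_ne (hu : u ≠ y) : ¬ single u 1 ≤ single y t := by
  classical
  simp [single_le_iff, hu.symm]

theorem not_single_add_single_le_single (hab : a ≠ b) :
    ¬ single a 1 + single b 1 ≤ single y t := by
  classical
  intro h
  have ha := le_def.mp h a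
  have hb := le_def.mp h b
  simp only [add_apply, single_apply] at ha hb
  split_ifs at ha hb <;> simp_all

theorem eq_of_single_add_single_le_single_add_single (hab : a ≠ b) (hzy : z ≠ y)
    (h : single a 1 + single b 1 ≤ single y r + single z 1) :
    1 ≤ r ∧ (a = y ∧ b = z ∨ a = z ∧ b = y) := by
  classical
  have ha := le_def.mp h a
  have hb := le_def.mp h b
  simp only [add_apply, single_apply] at ha hb
  split_ifs at ha hb <;> simp_all

theorem single_add_single_sub_single_add_single (hr : 1 ≤ r) :
    single y r + single z 1 - (single y 1 + single z 1) = single y (r - 1) := by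
  conv_lhs => rw [← Nat.sub_add_cancel hr, single_add, add_assoc]
  exact add_tsub_cancel_right _ _

end Finsupp

namespace MvPolynomial

theorem coeff_pderiv_mul_monomial {R : Type*} [CommSemiring R] (A : σ) (φ : MvPolynomial σ R)
    (m w : σ →₀ ℕ) :
    coeff m (pderiv A φ * monomial w 1) =
      if w ≤ m then coeff (m - w + Finsupp.single A 1) φ * ((m - w) A + 1) else 0 := by
  rw [coeff_mul_monomial', coeff_pderiv, mul_one]

theorem X_mul_X_eq_monomial {R : Type*} [CommSemiring R] (a b : σ) :
    (X a * X b : MvPolynomial σ R) = monomial (Finsupp.single a 1 + Finsupp.single b 1) 1 := by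
  rw [X, X, monomial_mul, one_mul]

end MvPolynomial

theorem sum_pderiv_mul_C_ind [Fintype σ] [DecidableEq σ] (a : σ) (c : ℝ)
    (φ M : MvPolynomial σ ℝ) :
    ∑ x, pderiv x φ * (C c * C (ind a x) * M) = C c * (pderiv a φ * M) := by
  simp [ind, apply_ite C, mul_left_comm]

namespace A1Network

variable {N : A1Network σ} {i₁ : N.ι} {n : ℕ}

noncomputable def blockLieD (N : A1Network σ) (k : N.Param → ℝ) (φ : MvPolynomial σ ℝ)
    (i : N.ι) (j : Fin (N.L i)) : MvPolynomial σ ℝ :=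
  C (k ⟨i, j, 0⟩) * ((pderiv (N.U i (j + 1)) φ - pderiv (N.Y i) φ - pderiv (N.S i j) φ) *
      (X (N.Y i) * X (N.S i j)))
    + C (k ⟨i, j, 1⟩) * ((pderiv (N.Y i) φ + pderiv (N.S i j) φ - pderiv (N.U i (j + 1)) φ) *
      X (N.U i (j + 1)))
    + C (k ⟨i, j, 2⟩) * ((pderiv (N.Y i) φ + pderiv (N.S i (j + 1)) φ -
      pderiv (N.U i (j + 1)) φ) * X (N.U i (j + 1)))

theorem coeff_blockLieD_eq_zero {k : N.Param → ℝ} {φ : MvPolynomial σ ℝ} {m : σ →₀ ℕ}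
    {i : N.ι} {j : Fin (N.L i)}
    (hpr : single (N.Y i) 1 + single (N.S i j) 1 ≤ m →
      ∀ A ∈ ({N.U i (j + 1), N.Y i, N.S i j} : Set σ),
        coeff (m - (single (N.Y i) 1 + single (N.S i j) 1) + single A 1) φ = 0)
    (huu : single (N.U i (j + 1)) 1 ≤ m →
      ∀ A ∈ ({N.Y i, N.S i j, N.S i (j + 1), N.U i (j + 1)} : Set σ),
        coeff (m - single (N.U i (j + 1)) 1 + single A 1) φ = 0) :
    coeff m (N.blockLieD k φ i j) = 0 := by
  simp only [blockLieD, X_mul_X_eq_monomial]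
  simp only [X, coeff_add, coeff_sub, coeff_C_mul, sub_mul, add_mul, coeff_pderiv_mul_monomial]
  split_ifs <;> simp [*]

section Evaluation

variable {k : N.Param → ℝ} {φ : MvPolynomial σ ℝ} {i : N.ι} {j : Fin (N.L i)} {e : σ →₀ ℕ}

theorem coeff_blockLieD_eq_c_mul
    (hpr : ¬ single (N.Y i) 1 + single (N.S i j) 1 ≤ e + single (N.U i (j + 1)) 1)
    (hY : coeff (e + single (N.Y i) 1) φ = 0) (hS : coeff (e + single (N.S i j) 1) φ = 0)
    (hU : coeff (e + single (N.U i (j + 1)) 1) φ = 0) (he : e (N.S i (j + 1)) = 0) :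
    coeff (e + single (N.U i (j + 1)) 1) (N.blockLieD k φ i j) =
      k ⟨i, j, 2⟩ * coeff (e + single (N.S i (j + 1)) 1) φ := by
  simp only [blockLieD, X_mul_X_eq_monomial]
  simp only [X, coeff_add, coeff_sub, coeff_C_mul, mul_sub, mul_add, sub_mul, add_mul,
    coeff_pderiv_mul_monomial, if_neg hpr, if_pos le_add_self, add_tsub_cancel_right]
  simp [hY, hS, hU, he]

theorem coeff_blockLieD_eq_b_mul
    (hpr : ¬ single (N.Y i) 1 + single (N.S i j) 1 ≤ e + single (N.U i (j + 1)) 1)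
    (hY : coeff (e + single (N.Y i) 1) φ = 0) (hS : coeff (e + single (N.S i (j + 1)) 1) φ = 0)
    (hU : coeff (e + single (N.U i (j + 1)) 1) φ = 0) (he : e (N.S i j) = 0) :
    coeff (e + single (N.U i (j + 1)) 1) (N.blockLieD k φ i j) =
      k ⟨i, j, 1⟩ * coeff (e + single (N.S i j) 1) φ := by
  simp only [blockLieD, X_mul_X_eq_monomial]
  simp only [X, coeff_add, coeff_sub, coeff_C_mul, mul_sub, mul_add, sub_mul, add_mul,
    coeff_pderiv_mul_monomial, if_neg hpr, if_pos le_add_self, add_tsub_cancel_right]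
  simp [hY, hS, hU, he]

theorem coeff_blockLieD_eq_a_mul
    (huu : ¬ single (N.U i (j + 1)) 1 ≤ e + (single (N.Y i) 1 + single (N.S i j) 1))
    (hY : coeff (e + single (N.Y i) 1) φ = 0) (hS : coeff (e + single (N.S i j) 1) φ = 0)
    (he : e (N.U i (j + 1)) = 0) :
    coeff (e + (single (N.Y i) 1 + single (N.S i j) 1)) (N.blockLieD k φ i j) =
      k ⟨i, j, 0⟩ * coeff (e + single (N.U i (j + 1)) 1) φ := by
  simp only [blockLieD, X_mul_X_eq_monomial]
  simp only [X, coeff_add, coeff_sub, coeff_C_mul, mul_sub, mul_add, sub_mul, add_mul,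
    coeff_pderiv_mul_monomial, if_neg huu, if_pos le_add_self, add_tsub_cancel_right]
  simp [hY, hS, he]

end Evaluation

theorem S_ne_Y_of_S_eq_S (h2 : N.Assumption2) {i i' : N.ι} {j j' j'' : ℕ} (hj : j ≤ N.L i)
    (hj' : j' ≤ N.L i) (hj'' : j'' ≤ N.L i') (hshare : N.S i j' = N.S i' j'') :
    N.S i j ≠ N.Y i' := by
  obtain ⟨part, -, hpart⟩ := h2
  obtain ⟨α, -, hα, -, -⟩ := hpart i
  obtain ⟨α', -, hα', hY', -⟩ := hpart i'
  intro h
  apply hY'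
  rw [← h, hα j hj, ← hα j' hj', hshare, hα' j'' hj'']

theorem Y_ne_S (h2 : N.Assumption2) (i : N.ι) {j : ℕ} (hj : j ≤ N.L i) : N.Y i ≠ N.S i j :=
  (S_ne_Y_of_S_eq_S h2 hj hj hj rfl).symm

open Classical in
noncomputable def chainIndex (N : A1Network σ) (i₁ : N.ι) (x : σ) : ℕ :=
  if h : ∃ j ≤ N.L i₁, N.S i₁ j = x then h.choose else 0

noncomputable def blockDepth (N : A1Network σ) (i₁ i : N.ι) (j : ℕ) : ℕ :=
  max (N.chainIndex i₁ (N.Y i)) (max (N.chainIndex i₁ (N.S i j)) (N.chainIndex i₁ (N.S i (j + 1))))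

open Classical in
noncomputable def depth (N : A1Network σ) (i₁ : N.ι) (x : σ) : ℕ :=
  if h : N.inter x then N.blockDepth i₁ h.choose h.choose_spec.choose else N.chainIndex i₁ x

theorem chainIndex_eq_zero {x : σ} (hx : ∀ j ≤ N.L i₁, N.S i₁ j ≠ x) :
    N.chainIndex i₁ x = 0 := by
  rw [chainIndex, dif_neg (by simpa using hx)]

theorem depth_of_not_inter {x : σ} (hx : ¬ N.inter x) : N.depth i₁ x = N.chainIndex i₁ x := by
  rw [depth, dif_neg hx]

theorem chainIndex_Y (h2 : N.Assumption2) : N.chainIndex i₁ (N.Y i₁) = 0 :=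
  chainIndex_eq_zero fun _ hj => (Y_ne_S h2 i₁ hj).symm

theorem chainIndex_Y_of_reverse (h2 : N.Assumption2) {i₂ : N.ι}
    (hS : ∀ j, j ≤ N.L i₁ → N.S i₂ j = N.S i₁ (N.L i₁ - j)) : N.chainIndex i₁ (N.Y i₂) = 0 :=
  chainIndex_eq_zero fun j hj => S_ne_Y_of_S_eq_S h2 (j' := N.L i₁) (j'' := 0) hj le_rfl
    (Nat.zero_le _) (by rw [hS 0 (Nat.zero_le _), Nat.sub_zero])

open Classical in
def OutOfReach (N : A1Network σ) (i₁ : N.ι) (n ℓ r : ℕ) (z : σ) : Prop :=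
  r + N.depth i₁ z < n ∨ ℓ + N.depth i₁ z < r + n + if N.inter z then 1 else 0

theorem outOfReach_iff_of_not_inter {ℓ r : ℕ} {z : σ} (hz : ¬ N.inter z) :
    N.OutOfReach i₁ n ℓ r z ↔ r + N.depth i₁ z < n ∨ ℓ + N.depth i₁ z < r + n := by
  simp [OutOfReach, hz]

theorem outOfReach_iff_of_inter {ℓ r : ℕ} {z : σ} (hz : N.inter z) :
    N.OutOfReach i₁ n ℓ r z ↔ r + N.depth i₁ z < n ∨ ℓ + N.depth i₁ z < r + n + 1 := by
  simp [OutOfReach, hz]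

namespace OutOfReach

variable {ℓ r : ℕ} {z : σ}

theorem of_succ (h : N.OutOfReach i₁ n (ℓ + 1) r z) : N.OutOfReach i₁ n ℓ r z := by
  unfold OutOfReach at h ⊢
  omega

theorem sub_one (hz : ¬ N.inter z) (h : N.OutOfReach i₁ n (ℓ + 1) r z) :
    N.OutOfReach i₁ n ℓ (r - 1) z := by
  rw [outOfReach_iff_of_not_inter hz] at h ⊢
  omega

theorem sub_one_of_inter {u : σ} (hz : ¬ N.inter z) (hu : N.inter u)
    (hd : N.depth i₁ u ≤ N.depth i₁ z + 1) (hr : 1 ≤ r) (h : N.OutOfReach i₁ n (ℓ + 1) r z) :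
    N.OutOfReach i₁ n ℓ (r - 1) u := by
  rw [outOfReach_iff_of_not_inter hz] at h
  rw [outOfReach_iff_of_inter hu]
  omega

theorem of_depth_le {x : σ} (hz : N.inter z) (hx : ¬ N.inter x)
    (hd : N.depth i₁ x ≤ N.depth i₁ z) (h : N.OutOfReach i₁ n (ℓ + 1) r z) :
    N.OutOfReach i₁ n ℓ r x := by
  rw [outOfReach_iff_of_inter hz] at h
  rw [outOfReach_iff_of_not_inter hx]
  omega

end OutOfReach

section

variable [DecidableEq σ]

theorem eq_of_Y_eq_of_S_eq (h1 : N.Assumption1) {i i' : N.ι} {j j' : ℕ} (hj : j ≤ N.L i)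
    (hj' : j' ≤ N.L i') (hY : N.Y i = N.Y i') (hS : N.S i j = N.S i' j') : i = i' :=
  h1.complex_unique i i' j j' hj hj' fun x => by rw [hY, hS]

theorem not_inter_S (h1 : N.Assumption1) (i : N.ι) {j : ℕ} (hj : j ≤ N.L i) :
    ¬ N.inter (N.S i j) := by
  rintro ⟨i', j', h⟩
  exact h1.U_ne_S i' j' i j hj h.symm

theorem not_inter_Y (h1 : N.Assumption1) (i : N.ι) : ¬ N.inter (N.Y i) := by
  rintro ⟨i', j', h⟩
  exact h1.U_ne_Y i' j' i h.symm

theorem chainIndex_S (h1 : N.Assumption1) {j : ℕ} (hj : j ≤ N.L i₁) :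
    N.chainIndex i₁ (N.S i₁ j) = j := by
  have h : ∃ j' ≤ N.L i₁, N.S i₁ j' = N.S i₁ j := ⟨j, hj, rfl⟩
  rw [chainIndex, dif_pos h]
  exact h1.S_inj i₁ _ j h.choose_spec.1 hj h.choose_spec.2

theorem depth_U (h1 : N.Assumption1) (i : N.ι) (j : Fin (N.L i)) :
    N.depth i₁ (N.U i (j + 1)) = N.blockDepth i₁ i j := by
  have h : N.inter (N.U i (j + 1)) := ⟨i, j, rfl⟩
  have key : ∀ i' (j' : Fin (N.L i')), N.U i' (j' + 1) = N.U i (j + 1) →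
      N.blockDepth i₁ i' j' = N.blockDepth i₁ i j := by
    rintro i' j' hU
    obtain ⟨rfl, hj⟩ := h1.U_inj _ _ _ _ hU
    rw [hj]
  rw [depth, dif_pos h, key _ _ h.choose_spec.choose_spec.symm]

theorem depth_S (h1 : N.Assumption1) {j : ℕ} (hj : j ≤ N.L i₁) : N.depth i₁ (N.S i₁ j) = j := by
  rw [depth_of_not_inter (not_inter_S h1 i₁ hj), chainIndex_S h1 hj]

theorem depth_le_depth_U (h1 : N.Assumption1) (i : N.ι) (j : Fin (N.L i)) :
    N.depth i₁ (N.Y i) ≤ N.depth i₁ (N.U i (j + 1)) ∧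
      N.depth i₁ (N.S i j) ≤ N.depth i₁ (N.U i (j + 1)) ∧
      N.depth i₁ (N.S i (j + 1)) ≤ N.depth i₁ (N.U i (j + 1)) := by
  rw [depth_U h1, depth_of_not_inter (not_inter_Y h1 i),
    depth_of_not_inter (not_inter_S h1 i j.isLt.le),
    depth_of_not_inter (not_inter_S h1 i (j := j + 1) j.isLt), blockDepth]
  omega

theorem depth_U_le_of_Y_eq (h1 : N.Assumption1) (h2 : N.Assumption2) {i : N.ι}
    (j : Fin (N.L i)) (hY : N.Y i = N.Y i₁) :
    N.depth i₁ (N.U i (j + 1)) ≤ N.depth i₁ (N.S i j) + 1 := by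
  rw [depth_U h1, depth_of_not_inter (not_inter_S h1 i j.isLt.le), blockDepth, hY,
    chainIndex_Y h2]
  by_cases hchain : ∃ j' ≤ N.L i₁, N.S i₁ j' = N.S i j
  · obtain ⟨j', hj', hS⟩ := hchain
    obtain rfl := eq_of_Y_eq_of_S_eq h1 j.isLt.le hj' hY hS.symm
    rw [chainIndex_S h1 j.isLt.le, chainIndex_S h1 j.isLt]
    omega
  · have hoff : ∀ j' ≤ N.L i₁, N.S i₁ j' ≠ N.S i (j + 1) := by
      rintro j' hj' hS
      obtain rfl := eq_of_Y_eq_of_S_eq h1 j.isLt hj' hY hS.symm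
      exact hchain ⟨j, j.isLt.le, rfl⟩
    rw [chainIndex_eq_zero (by simpa using hchain), chainIndex_eq_zero hoff]
    omega

theorem depth_U_le_of_S_eq (h1 : N.Assumption1) (h2 : N.Assumption2) {i : N.ι}
    (j : Fin (N.L i)) (hS : N.S i j = N.Y i₁) :
    N.depth i₁ (N.U i (j + 1)) ≤ N.depth i₁ (N.Y i) := by
  have hoff : ∀ j' ≤ N.L i₁, N.S i₁ j' ≠ N.S i (j + 1) := fun j' hj' hshare =>
    S_ne_Y_of_S_eq_S h2 j.isLt.le j.isLt hj' hshare.symm hS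
  rw [depth_U h1, depth_of_not_inter (not_inter_Y h1 i), blockDepth, hS, chainIndex_Y h2,
    chainIndex_eq_zero hoff]
  omega

theorem depth_U_chain (h1 : N.Assumption1) (h2 : N.Assumption2) (j : Fin (N.L i₁)) :
    N.depth i₁ (N.U i₁ (j + 1)) = j + 1 := by
  rw [depth_U h1, blockDepth, chainIndex_Y h2, chainIndex_S h1 j.isLt.le, chainIndex_S h1 j.isLt]
  omega

theorem depth_U_reverse (h1 : N.Assumption1) (h2 : N.Assumption2) {i₂ : N.ι}
    (hL : N.L i₂ = N.L i₁) (hS : ∀ j, j ≤ N.L i₁ → N.S i₂ j = N.S i₁ (N.L i₁ - j))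
    (j : Fin (N.L i₂)) : N.depth i₁ (N.U i₂ (j + 1)) = N.L i₁ - j := by
  have hj : (j : ℕ) < N.L i₁ := hL ▸ j.isLt
  rw [depth_U h1, blockDepth, chainIndex_Y_of_reverse h2 hS, hS j hj.le, hS (j + 1) hj,
    chainIndex_S h1 (Nat.sub_le _ _), chainIndex_S h1 (Nat.sub_le _ _)]
  omega

theorem not_le_Y_pow_add_U (h1 : N.Assumption1) (h2 : N.Assumption2) (i : N.ι) (j : Fin (N.L i))
    (r : ℕ) (i₀ : N.ι) (j₀ : Fin (N.L i₀)) :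
    ¬ single (N.Y i) 1 + single (N.S i j) 1 ≤ single (N.Y i₁) r + single (N.U i₀ (j₀ + 1)) 1 := by
  intro hle
  obtain ⟨-, ⟨-, hS⟩ | ⟨hY, -⟩⟩ := Finsupp.eq_of_single_add_single_le_single_add_single
    (Y_ne_S h2 i j.isLt.le) (h1.U_ne_Y i₀ j₀ i₁) hle
  · exact h1.U_ne_S i₀ j₀ i j j.isLt.le hS.symm
  · exact h1.U_ne_Y i₀ j₀ i hY.symm

end

variable [Fintype σ] [DecidableEq σ]

theorem deriv_succ (k : N.Param → ℝ) (ℓ : ℕ) (x : σ) :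
    N.deriv k (ℓ + 1) x = lieD (N.rhs k) (N.deriv k ℓ x) := rfl

theorem lieD_rhs (k : N.Param → ℝ) (φ : MvPolynomial σ ℝ) :
    lieD (N.rhs k) φ = ∑ i, ∑ j, N.blockLieD k φ i j := by
  simp only [lieD, rhs, Finset.mul_sum]
  rw [Finset.sum_comm]
  refine Finset.sum_congr rfl fun i _ => ?_
  rw [Finset.sum_comm]
  refine Finset.sum_congr rfl fun j _ => ?_
  simp only [blockLieD, map_mul, map_sub, map_add, mul_add, mul_sub, add_mul, sub_mul,
    Finset.sum_add_distrib, Finset.sum_sub_distrib]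
  simp only [sum_pderiv_mul_C_ind]

theorem coeff_lieD_rhs_eq_coeff_blockLieD (k : N.Param → ℝ) (φ : MvPolynomial σ ℝ)
    (m : σ →₀ ℕ) (i₀ : N.ι) (j₀ : Fin (N.L i₀))
    (h : ∀ i (j : Fin (N.L i)), ¬ (i = i₀ ∧ (j : ℕ) = j₀) → coeff m (N.blockLieD k φ i j) = 0) :
    coeff m (lieD (N.rhs k) φ) = coeff m (N.blockLieD k φ i₀ j₀) := by
  rw [lieD_rhs, coeff_sum, Finset.sum_eq_single i₀, coeff_sum, Finset.sum_eq_single j₀]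
  · exact fun j _ hj => h i₀ j fun ⟨_, hj'⟩ => hj (Fin.ext hj')
  · simp
  · exact fun i _ hi => by
      rw [coeff_sum]
      exact Finset.sum_eq_zero fun j _ => h i j fun h' => hi h'.1
  · simp

theorem coeff_lieD_rhs_eq_zero {k : N.Param → ℝ} {φ : MvPolynomial σ ℝ} {m : σ →₀ ℕ}
    (h : ∀ i j, coeff m (N.blockLieD k φ i j) = 0) : coeff m (lieD (N.rhs k) φ) = 0 := by
  rw [lieD_rhs, coeff_sum]
  exact Finset.sum_eq_zero fun i _ => by rw [coeff_sum]; exact Finset.sum_eq_zero fun j _ => h i j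

theorem coeff_single_lieD_rhs_eq_zero (h2 : N.Assumption2) (k : N.Param → ℝ)
    (φ : MvPolynomial σ ℝ) {x : σ} (hx : ¬ N.inter x) (t : ℕ) :
    coeff (single x t) (lieD (N.rhs k) φ) = 0 :=
  coeff_lieD_rhs_eq_zero fun i j => coeff_blockLieD_eq_zero
    (fun h => absurd h (Finsupp.not_single_add_single_le_single (Y_ne_S h2 i j.isLt.le)))
    (fun h => absurd h (Finsupp.not_single_le_single_of_ne fun hU => hx (hU ▸ ⟨i, j, rfl⟩)))

theorem coeff_single_Y_deriv_eq_zero (h1 : N.Assumption1) (h2 : N.Assumption2) (hnL : n ≤ N.L i₁)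
    (k : N.Param → ℝ) (ℓ t : ℕ) : coeff (single (N.Y i₁) t) (N.deriv k ℓ (N.S i₁ n)) = 0 := by
  cases ℓ with
  | zero =>
    rw [deriv, lieDIter, coeff_X, if_neg]
    rw [Finsupp.single_eq_single_iff]
    rintro (⟨h, -⟩ | ⟨h, -⟩)
    · exact Y_ne_S h2 i₁ hnL h.symm
    · exact one_ne_zero h
  | succ ℓ => exact coeff_single_lieD_rhs_eq_zero h2 k _ (not_inter_Y h1 i₁) t

theorem coeff_lieD_rhs_eq_zero_of_outOfReach (h1 : N.Assumption1) (h2 : N.Assumption2)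
    (k : N.Param → ℝ) {φ : MvPolynomial σ ℝ} {ℓ : ℕ}
    (hpure : ∀ t, coeff (single (N.Y i₁) t) φ = 0)
    (hmixed : ∀ r z, z ≠ N.Y i₁ → N.OutOfReach i₁ n ℓ r z →
      coeff (single (N.Y i₁) r + single z 1) φ = 0)
    {r : ℕ} {z : σ} (hz : z ≠ N.Y i₁) (hout : N.OutOfReach i₁ n (ℓ + 1) r z) :
    coeff (single (N.Y i₁) r + single z 1) (lieD (N.rhs k) φ) = 0 := by
  have hφ : ∀ r' A, (A ≠ N.Y i₁ → N.OutOfReach i₁ n ℓ r' A) →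
      coeff (single (N.Y i₁) r' + single A 1) φ = 0 := by
    intro r' A hA
    by_cases hAy : A = N.Y i₁
    · rw [hAy, ← Finsupp.single_add]
      exact hpure _
    · exact hmixed r' A hAy (hA hAy)
  -- The predecessors of `y^r z` in a block are `y^(r-1) A` if `y + z` is its reactant complex and
  -- `y^r A` if `z` is its intermediate, `A` running over the species of the block.
  refine coeff_lieD_rhs_eq_zero fun i j => coeff_blockLieD_eq_zero (fun hle => ?_) (fun hle => ?_)
  · obtain ⟨hr, ⟨hY, hS⟩ | ⟨hY, hS⟩⟩ :=
      Finsupp.eq_of_single_add_single_le_single_add_single (Y_ne_S h2 i j.isLt.le) hz hle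
    · have hzS := hS ▸ not_inter_S h1 i j.isLt.le
      have hU := depth_U_le_of_Y_eq h1 h2 j hY
      rw [hY, hS, Finsupp.single_add_single_sub_single_add_single hr]
      rintro A (rfl | rfl | rfl)
      · exact hφ _ _ fun _ => hout.sub_one_of_inter hzS ⟨i, j, rfl⟩ (hS ▸ hU) hr
      · exact hφ _ _ fun h => absurd rfl h
      · exact hφ _ _ fun _ => hout.sub_one hzS
    · have hzY := hY ▸ not_inter_Y h1 i
      have hU := hY ▸ depth_U_le_of_S_eq h1 h2 j hS
      rw [hY, hS, add_comm (single z 1), Finsupp.single_add_single_sub_single_add_single hr]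
      rintro A (rfl | rfl | rfl)
      · exact hφ _ _ fun _ => hout.sub_one_of_inter hzY ⟨i, j, rfl⟩ (by omega) hr
      · exact hφ _ _ fun _ => hout.sub_one hzY
      · exact hφ _ _ fun h => absurd rfl h
  · have hU := Finsupp.eq_of_single_le_single_add_single (h1.U_ne_Y i j i₁) hle
    have hUz : N.inter z := hU ▸ ⟨i, j, rfl⟩
    obtain ⟨hdY, hdS, hdS'⟩ := depth_le_depth_U (i₁ := i₁) h1 i j
    rw [hU] at hdY hdS hdS' ⊢
    rw [add_tsub_cancel_right]
    rintro A (rfl | rfl | rfl | rfl)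
    · exact hφ _ _ fun _ => hout.of_depth_le hUz (not_inter_Y h1 i) hdY
    · exact hφ _ _ fun _ => hout.of_depth_le hUz (not_inter_S h1 i j.isLt.le) hdS
    · exact hφ _ _ fun _ => hout.of_depth_le hUz (not_inter_S h1 i (j := j + 1) j.isLt) hdS'
    · exact hφ _ _ fun _ => hout.of_succ

theorem coeff_deriv_eq_zero_of_outOfReach (h1 : N.Assumption1) (h2 : N.Assumption2)
    (hnL : n ≤ N.L i₁) (k : N.Param → ℝ) (ℓ : ℕ) {r : ℕ} {z : σ} (hz : z ≠ N.Y i₁)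
    (hout : N.OutOfReach i₁ n ℓ r z) :
    coeff (single (N.Y i₁) r + single z 1) (N.deriv k ℓ (N.S i₁ n)) = 0 := by
  induction ℓ generalizing r z with
  | zero =>
    rw [deriv, lieDIter, coeff_X, if_neg]
    intro h
    have hz' := DFunLike.congr_fun h z
    have hy := DFunLike.congr_fun h (N.Y i₁)
    simp only [Finsupp.add_apply, Finsupp.single_apply, if_neg hz.symm, if_neg hz, if_true]
      at hz' hy
    split_ifs at hz' with hzS
    rw [if_neg (Y_ne_S h2 i₁ hnL).symm] at hy
    subst hzS
    rw [outOfReach_iff_of_not_inter (not_inter_S h1 i₁ hnL), depth_S h1 hnL] at hout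
    omega
  | succ ℓ ih =>
    exact coeff_lieD_rhs_eq_zero_of_outOfReach h1 h2 k (coeff_single_Y_deriv_eq_zero h1 h2 hnL k ℓ)
      (fun _ _ hz hout => ih hz hout) hz hout

theorem coeff_lieD_rhs_Y_pow_add_U (h1 : N.Assumption1) (h2 : N.Assumption2) (k : N.Param → ℝ)
    (φ : MvPolynomial σ ℝ) (r : ℕ) (i₀ : N.ι) (j₀ : Fin (N.L i₀)) :
    coeff (single (N.Y i₁) r + single (N.U i₀ (j₀ + 1)) 1) (lieD (N.rhs k) φ) =
      coeff (single (N.Y i₁) r + single (N.U i₀ (j₀ + 1)) 1) (N.blockLieD k φ i₀ j₀) := by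
  refine coeff_lieD_rhs_eq_coeff_blockLieD k φ _ i₀ j₀ fun i j hij =>
    coeff_blockLieD_eq_zero (fun hle => absurd hle (not_le_Y_pow_add_U h1 h2 i j r i₀ j₀))
      (fun hle => absurd (h1.U_inj _ _ _ _ (Finsupp.eq_of_single_le_single_add_single
        (h1.U_ne_Y i j i₁) hle)) hij)

theorem coeff_deriv_odd (h1 : N.Assumption1) (h2 : N.Assumption2) (hnL : n ≤ N.L i₁)
    (k : N.Param → ℝ) {q : ℕ} (j : Fin (N.L i₁)) (hj : j + 1 + q = n) :
    coeff (single (N.Y i₁) q + single (N.U i₁ (j + 1)) 1) (N.deriv k (2 * q + 1) (N.S i₁ n)) =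
      k ⟨i₁, j, 2⟩ *
        coeff (single (N.Y i₁) q + single (N.S i₁ (j + 1)) 1) (N.deriv k (2 * q) (N.S i₁ n)) := by
  have hU : N.inter (N.U i₁ (j + 1)) := ⟨i₁, j, rfl⟩
  rw [deriv_succ, coeff_lieD_rhs_Y_pow_add_U h1 h2, coeff_blockLieD_eq_c_mul
    (not_le_Y_pow_add_U h1 h2 i₁ j q i₁ j)]
  · rw [← Finsupp.single_add]
    exact coeff_single_Y_deriv_eq_zero h1 h2 hnL k _ _
  · refine coeff_deriv_eq_zero_of_outOfReach h1 h2 hnL k _ (Y_ne_S h2 i₁ j.isLt.le).symm ?_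
    rw [outOfReach_iff_of_not_inter (not_inter_S h1 i₁ j.isLt.le), depth_S h1 j.isLt.le]
    omega
  · refine coeff_deriv_eq_zero_of_outOfReach h1 h2 hnL k _ (h1.U_ne_Y i₁ j i₁) ?_
    rw [outOfReach_iff_of_inter hU, depth_U_chain h1 h2]
    omega
  · exact Finsupp.single_eq_of_ne (Y_ne_S h2 i₁ (j := j + 1) j.isLt).symm

theorem coeff_deriv_even (h1 : N.Assumption1) (h2 : N.Assumption2) (hnL : n ≤ N.L i₁)
    (k : N.Param → ℝ) {q : ℕ} (j : Fin (N.L i₁)) (hj : j + 1 + q = n) :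
    coeff (single (N.Y i₁) (q + 1) + single (N.S i₁ j) 1) (N.deriv k (2 * q + 2) (N.S i₁ n)) =
      k ⟨i₁, j, 0⟩ * coeff (single (N.Y i₁) q + single (N.U i₁ (j + 1)) 1)
        (N.deriv k (2 * q + 1) (N.S i₁ n)) := by
  have hm : single (N.Y i₁) (q + 1) + single (N.S i₁ j) 1 =
      single (N.Y i₁) q + (single (N.Y i₁) 1 + single (N.S i₁ j) 1) := by
    rw [← add_assoc, ← Finsupp.single_add]
  have hSy : N.S i₁ j ≠ N.Y i₁ := (Y_ne_S h2 i₁ j.isLt.le).symm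
  have hpure :
      coeff (single (N.Y i₁) q + single (N.Y i₁) 1) (N.deriv k (2 * q + 1) (N.S i₁ n)) = 0 := by
    rw [← Finsupp.single_add]
    exact coeff_single_Y_deriv_eq_zero h1 h2 hnL k _ _
  have hout : ∀ x, x ≠ N.Y i₁ → N.depth i₁ x ≤ j →
      coeff (single (N.Y i₁) q + single x 1) (N.deriv k (2 * q + 1) (N.S i₁ n)) = 0 :=
    fun x hx hd => coeff_deriv_eq_zero_of_outOfReach h1 h2 hnL k _ hx (Or.inl (by omega))
  have hdS := depth_S h1 j.isLt.le
  rw [deriv_succ, coeff_lieD_rhs_eq_coeff_blockLieD k _ _ i₁ j, hm, coeff_blockLieD_eq_a_mul]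
  · rw [← hm]
    exact fun hle => h1.U_ne_S i₁ j i₁ j j.isLt.le
      (Finsupp.eq_of_single_le_single_add_single (h1.U_ne_Y i₁ j i₁) hle)
  · exact hpure
  · exact hout _ hSy hdS.le
  · exact Finsupp.single_eq_of_ne (h1.U_ne_Y i₁ j i₁)
  intro i' j' hij
  refine coeff_blockLieD_eq_zero (fun hle => ?_) (fun hle => ?_)
  · obtain ⟨hr, ⟨hY, hS⟩ | ⟨hY, hS⟩⟩ :=
      Finsupp.eq_of_single_add_single_le_single_add_single (Y_ne_S h2 i' j'.isLt.le) hSy hle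
    · obtain rfl := eq_of_Y_eq_of_S_eq h1 j'.isLt.le j.isLt.le hY hS
      exact absurd ⟨rfl, h1.S_inj _ _ _ j'.isLt.le j.isLt.le hS⟩ hij
    · rw [hY, hS, add_comm (single (N.S i₁ j) 1),
        Finsupp.single_add_single_sub_single_add_single hr, Nat.add_sub_cancel]
      rintro A (rfl | rfl | rfl)
      · exact hout _ (h1.U_ne_Y i' j' i₁) (hdS ▸ hY ▸ depth_U_le_of_S_eq h1 h2 j' hS)
      · exact hout _ hSy hdS.le
      · exact hpure
  · exact absurd (Finsupp.eq_of_single_le_single_add_single (h1.U_ne_Y i' j' i₁) hle)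
      (h1.U_ne_S i' j' i₁ j j.isLt.le)

theorem coeff_deriv_chain (h1 : N.Assumption1) (h2 : N.Assumption2) (hnL : n ≤ N.L i₁)
    (k : N.Param → ℝ) {q : ℕ} (hq : q < n) :
    coeff (single (N.Y i₁) q + single (N.S i₁ (n - q)) 1) (N.deriv k (2 * q) (N.S i₁ n)) =
      ∏ j ∈ Finset.range q,
        (k ⟨i₁, ⟨n - j - 1, by omega⟩, 0⟩ * k ⟨i₁, ⟨n - j - 1, by omega⟩, 2⟩) := by
  induction q with
  | zero => simp [deriv, lieDIter]
  | succ q ih =>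
    have hj : n - q - 1 + 1 = n - q := by omega
    rw [Finset.prod_range_succ, ← ih (by omega), show n - (q + 1) = n - q - 1 by omega,
      show 2 * (q + 1) = 2 * q + 2 by ring,
      coeff_deriv_even h1 h2 hnL k ⟨n - q - 1, by omega⟩ (by simp only; omega),
      coeff_deriv_odd h1 h2 hnL k ⟨n - q - 1, by omega⟩ (by simp only; omega)]
    simp only [hj]
    ring

theorem coeff_deriv_reverse (h1 : N.Assumption1) (h2 : N.Assumption2) (hnL : n ≤ N.L i₁)
    (k : N.Param → ℝ) {i₂ : N.ι} (hne : i₁ ≠ i₂) (hL : N.L i₂ = N.L i₁)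
    (hS : ∀ j, j ≤ N.L i₁ → N.S i₂ j = N.S i₁ (N.L i₁ - j)) {q : ℕ} (hq : q < n)
    (j : Fin (N.L i₂)) (hj : (j : ℕ) = N.L i₁ - (n - q)) :
    coeff (single (N.Y i₁) q + single (N.U i₂ (j + 1)) 1) (N.deriv k (2 * q + 1) (N.S i₁ n)) =
      k ⟨i₂, j, 1⟩ *
        coeff (single (N.Y i₁) q + single (N.S i₁ (n - q)) 1) (N.deriv k (2 * q) (N.S i₁ n)) := by
  have hSj : N.S i₂ j = N.S i₁ (n - q) := by
    rw [hS _ (by omega), show N.L i₁ - j = n - q by omega]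
  have hSj' : N.S i₂ (j + 1) = N.S i₁ (n - q - 1) := by
    rw [hS _ (by omega), show N.L i₁ - (j + 1) = n - q - 1 by omega]
  have hYY : N.Y i₂ ≠ N.Y i₁ := fun hY => hne <| eq_of_Y_eq_of_S_eq h1 (j := 0) (j' := N.L i₂)
    (Nat.zero_le _) le_rfl hY.symm (by rw [hS _ (hL ▸ le_rfl), hL, Nat.sub_self])
  rw [deriv_succ, coeff_lieD_rhs_Y_pow_add_U h1 h2,
    coeff_blockLieD_eq_b_mul (not_le_Y_pow_add_U h1 h2 i₂ j q i₂ j), hSj]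
  · refine coeff_deriv_eq_zero_of_outOfReach h1 h2 hnL k _ hYY ?_
    rw [outOfReach_iff_of_not_inter (not_inter_Y h1 i₂), depth_of_not_inter (not_inter_Y h1 i₂),
      chainIndex_Y_of_reverse h2 hS]
    omega
  · rw [hSj']
    refine coeff_deriv_eq_zero_of_outOfReach h1 h2 hnL k _ (Y_ne_S h2 i₁ (by omega)).symm ?_
    rw [outOfReach_iff_of_not_inter (not_inter_S h1 i₁ (by omega)), depth_S h1 (by omega)]
    omega
  · refine coeff_deriv_eq_zero_of_outOfReach h1 h2 hnL k _ (h1.U_ne_Y i₂ j i₁) ?_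
    rw [outOfReach_iff_of_inter ⟨i₂, j, rfl⟩, depth_U_reverse h1 h2 hL hS]
    omega
  · rw [hSj]
    exact Finsupp.single_eq_of_ne (Y_ne_S h2 i₁ ((Nat.sub_le n q).trans hnL)).symm

/-- In the paper's notation `V_j` is `N.U i₂ (L + 1 - j)`, the intermediate of block `L - j` of
component `i₂`, and `b̃_j` is the `b`-constant of that block. -/
theorem coeff_y_pow_v
    (N : A1Network σ) (h1 : N.Assumption1) (h2 : N.Assumption2)
    (i₁ i₂ : N.ι) (hne : i₁ ≠ i₂) (hL : N.L i₂ = N.L i₁)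
    (hS : ∀ j, j ≤ N.L i₁ → N.S i₂ j = N.S i₁ (N.L i₁ - j))
    (k : N.Param → ℝ)
    (n kk : ℕ) (hn1 : 1 ≤ n) (hnL : n ≤ N.L i₁) (hkk : kk ≤ n - 1) :
    (MvPolynomial.coeff
        (Finsupp.single (N.Y i₁) kk +
          Finsupp.single (N.U i₂ (N.L i₁ + 1 - (n - kk))) 1)
        (N.deriv k (2 * kk + 1) (N.S i₁ n))
      = k ⟨i₂, ⟨N.L i₁ - (n - kk), by omega⟩, 1⟩ *
          ∏ j ∈ Finset.range kk,
            (k ⟨i₁, ⟨n - j - 1, by omega⟩, 0⟩ * k ⟨i₁, ⟨n - j - 1, by omega⟩, 2⟩))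
    ∧ (∀ ℓ < 2 * kk + 1, ∀ r : ℕ,
        MvPolynomial.coeff
          (Finsupp.single (N.Y i₁) r +
            Finsupp.single (N.U i₂ (N.L i₁ + 1 - (n - kk))) 1)
          (N.deriv k ℓ (N.S i₁ n)) = 0)
    ∧ (∀ r : ℕ, r ≠ kk →
        MvPolynomial.coeff
          (Finsupp.single (N.Y i₁) r +
            Finsupp.single (N.U i₂ (N.L i₁ + 1 - (n - kk))) 1)
          (N.deriv k (2 * kk + 1) (N.S i₁ n)) = 0) := by
  let j₂ : Fin (N.L i₂) := ⟨N.L i₁ - (n - kk), by omega⟩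
  have hV : N.L i₁ + 1 - (n - kk) = j₂ + 1 := by simp only [j₂]; omega
  have hdV : N.depth i₁ (N.U i₂ (j₂ + 1)) = n - kk := by
    rw [depth_U_reverse h1 h2 hL hS]
    simp only [j₂]
    omega
  have hvanish : ∀ ℓ r, r < kk ∨ ℓ < r + kk + 1 →
      coeff (single (N.Y i₁) r + single (N.U i₂ (j₂ + 1)) 1) (N.deriv k ℓ (N.S i₁ n)) = 0 :=
    fun ℓ r h => coeff_deriv_eq_zero_of_outOfReach h1 h2 hnL k ℓ (h1.U_ne_Y i₂ j₂ i₁) (by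
      rw [outOfReach_iff_of_inter ⟨i₂, j₂, rfl⟩, hdV]
      omega)
  rw [hV]
  refine ⟨?_, fun ℓ hℓ r => hvanish ℓ r (by omega), fun r hr => hvanish _ r (by omega)⟩
  rw [coeff_deriv_reverse h1 h2 hnL k hne hL hS (by omega) j₂ rfl,
    coeff_deriv_chain h1 h2 hnL k (by omega)]

end A1Network
end

section
/- For a reaction network satisfying Assumptions 1 and 2, if a monomial ∏_{i=1}^m z_i with m ≥ 2, where X and all the Z_i are non-intermediate species (repetitions among the Z_i allowed), appears with nonzero coefficient in a derivative x^{(ℓ)} for some ℓ ≥ 1, then there exist indices 1 ≤ i_1 < i_2 ≤ m such that Z_{i_1} reacts with Z_{i_2}. In particular, no derivative x^{(ℓ)}, ℓ ≥ 1, of a non-intermediate species variable contains a monomial which is a pure power z^m, m ≥ 2, of a variable corresponding to a non-intermediate species. -/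
open MvPolynomial Finsupp

variable {σ : Type*}

namespace A1Network

variable [Fintype σ] [DecidableEq σ]

/-- Every monomial of `rhs` is a pair `Y+S` or a single intermediate `U`. -/
lemma support_rhs (N : A1Network σ) (k : N.Param → ℝ) (x : σ) :
    ∀ d ∈ (N.rhs k x).support,
      (∃ i, ∃ j : Fin (N.L i),
          d = Finsupp.single (N.Y i) 1 + Finsupp.single (N.S i (j : ℕ)) 1) ∨
      (∃ i, ∃ j : Fin (N.L i), d = Finsupp.single (N.U i ((j : ℕ) + 1)) 1) := by
  intro d hd
  have h1 := MvPolynomial.support_sum hd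
  rw [Finset.mem_biUnion] at h1
  obtain ⟨i, -, hi⟩ := h1
  have h2 := MvPolynomial.support_sum hi
  rw [Finset.mem_biUnion] at h2
  obtain ⟨j, -, hj⟩ := h2
  have h3 := MvPolynomial.support_add hj
  rw [Finset.mem_union] at h3
  rcases h3 with h3 | h3
  · have h4 := MvPolynomial.support_add h3
    rw [Finset.mem_union] at h4
    rcases h4 with h4 | h4
    · left
      refine ⟨i, j, ?_⟩
      have : (C (k ⟨i, j, 0⟩ *
          (ind (N.U i ((j : ℕ) + 1)) x - ind (N.Y i) x - ind (N.S i (j : ℕ)) x)) *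
          (X (N.Y i) * X (N.S i (j : ℕ))) : MvPolynomial σ ℝ)
          = monomial (Finsupp.single (N.Y i) 1 + Finsupp.single (N.S i (j : ℕ)) 1)
            (k ⟨i, j, 0⟩ *
          (ind (N.U i ((j : ℕ) + 1)) x - ind (N.Y i) x - ind (N.S i (j : ℕ)) x)) := by
        rw [MvPolynomial.X, MvPolynomial.X, MvPolynomial.C_apply,
          MvPolynomial.monomial_mul, MvPolynomial.monomial_mul]
        simp
      rw [this] at h4
      have := MvPolynomial.support_monomial_subset h4
      simpa using this
    · right
      refine ⟨i, j, ?_⟩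
      have : (C (k ⟨i, j, 1⟩ *
          (ind (N.Y i) x + ind (N.S i (j : ℕ)) x - ind (N.U i ((j : ℕ) + 1)) x)) *
          X (N.U i ((j : ℕ) + 1)) : MvPolynomial σ ℝ)
          = monomial (Finsupp.single (N.U i ((j : ℕ) + 1)) 1)
            (k ⟨i, j, 1⟩ *
          (ind (N.Y i) x + ind (N.S i (j : ℕ)) x - ind (N.U i ((j : ℕ) + 1)) x)) := by
        rw [MvPolynomial.X, MvPolynomial.C_apply, MvPolynomial.monomial_mul]
        simp
      rw [this] at h4
      have := MvPolynomial.support_monomial_subset h4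
      simpa using this
  · right
    refine ⟨i, j, ?_⟩
    have : (C (k ⟨i, j, 2⟩ *
        (ind (N.Y i) x + ind (N.S i ((j : ℕ) + 1)) x - ind (N.U i ((j : ℕ) + 1)) x)) *
        X (N.U i ((j : ℕ) + 1)) : MvPolynomial σ ℝ)
        = monomial (Finsupp.single (N.U i ((j : ℕ) + 1)) 1)
          (k ⟨i, j, 2⟩ *
        (ind (N.Y i) x + ind (N.S i ((j : ℕ) + 1)) x - ind (N.U i ((j : ℕ) + 1)) x)) := by
      rw [MvPolynomial.X, MvPolynomial.C_apply, MvPolynomial.monomial_mul]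
      simp
    rw [this] at h3
    have := MvPolynomial.support_monomial_subset h3
    simpa using this

/-- Every monomial of a Lie derivative (w.r.t. the mass-action field) contains, in its
support, either a reacting pair `Y i, S i j` or an intermediate. -/
lemma support_lieD (N : A1Network σ) (k : N.Param → ℝ) (φ : MvPolynomial σ ℝ) :
    ∀ d ∈ (lieD (N.rhs k) φ).support,
      (∃ i, ∃ j : Fin (N.L i),
          N.Y i ∈ d.support ∧ N.S i (j : ℕ) ∈ d.support) ∨
      (∃ i, ∃ j : Fin (N.L i), N.U i ((j : ℕ) + 1) ∈ d.support) := by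
  intro d hd
  have h1 := MvPolynomial.support_sum hd
  rw [Finset.mem_biUnion] at h1
  obtain ⟨x, -, hx⟩ := h1
  have h2 := MvPolynomial.support_mul _ _ hx
  rw [Finset.mem_add] at h2
  obtain ⟨d₁, -, d₂, hd₂, hsum⟩ := h2
  have hsub : d₂.support ⊆ d.support := by
    intro a ha
    rw [Finsupp.mem_support_iff] at ha ⊢
    rw [← hsum]
    simp only [Finsupp.add_apply]
    omega
  rcases N.support_rhs k x d₂ hd₂ with ⟨i, j, rfl⟩ | ⟨i, j, rfl⟩
  · left
    refine ⟨i, j, hsub ?_, hsub ?_⟩ <;>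
      · rw [Finsupp.mem_support_iff]
        simp [Finsupp.single_apply]
  · right
    exact ⟨i, j, hsub (by simp [Finsupp.mem_support_iff, Finsupp.single_apply])⟩

lemma mem_support_sum_single {m : ℕ} {z : Fin m → σ} {a : σ}
    (ha : a ∈ (∑ i, Finsupp.single (z i) 1 : σ →₀ ℕ).support) : ∃ i, z i = a := by
  have := Finsupp.support_finset_sum (s := (Finset.univ : Finset (Fin m)))
    (f := fun i => Finsupp.single (z i) 1) ha
  rw [Finset.mem_biUnion] at this
  obtain ⟨i, -, hi⟩ := this
  exact ⟨i, (Finsupp.mem_support_single _ _ _).mp hi |>.1.symm⟩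

/-- **Lemma and Corollary.** For a reaction network satisfying Assumptions 1 and 2:
if a monomial `∏_{i=1}^m z_i` with `m ≥ 2`, where `X` and all the `Z i` are
non-intermediate species (repetitions allowed), appears in `x^{(ℓ)}` for some `ℓ ≥ 1`,
then there are indices `i₁ < i₂` with `Z i₁` reacting with `Z i₂`. In particular, no
derivative `x^{(ℓ)}`, `ℓ ≥ 1`, of a non-intermediate species contains a pure power
`z^m`, `m ≥ 2`, of a non-intermediate species variable. -/
theorem products_of_nonintermediates
    (N : A1Network σ) (h1 : N.Assumption1) (h2 : N.Assumption2)
    (k : N.Param → ℝ) (hk : ∀ r, 0 < k r) :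
    (∀ x : σ, ¬ N.inter x → ∀ m : ℕ, 2 ≤ m → ∀ z : Fin m → σ,
        (∀ i, ¬ N.inter (z i)) → ∀ ℓ, 1 ≤ ℓ →
        MvPolynomial.coeff (∑ i, Finsupp.single (z i) 1) (N.deriv k ℓ x) ≠ 0 →
        ∃ i₁ i₂ : Fin m, i₁ < i₂ ∧ N.reactsWith (z i₁) (z i₂))
    ∧ (∀ x : σ, ¬ N.inter x → ∀ z : σ, ¬ N.inter z → ∀ m : ℕ, 2 ≤ m → ∀ ℓ, 1 ≤ ℓ →
        MvPolynomial.coeff (Finsupp.single z m) (N.deriv k ℓ x) = 0) := by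
  obtain ⟨part, hpart0, hpart⟩ := h2
  -- key structural fact, for any monomial in any derivative of order ≥ 1
  have key : ∀ (x : σ) (ℓ : ℕ), 1 ≤ ℓ → ∀ d ∈ (N.deriv k ℓ x).support,
      (∃ i, ∃ j : Fin (N.L i),
          N.Y i ∈ d.support ∧ N.S i (j : ℕ) ∈ d.support) ∨
      (∃ i, ∃ j : Fin (N.L i), N.U i ((j : ℕ) + 1) ∈ d.support) := by
    intro x ℓ hℓ d hd
    obtain ⟨n, rfl⟩ : ∃ n, ℓ = n + 1 := ⟨ℓ - 1, by omega⟩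
    exact N.support_lieD k _ d hd
  have hYS : ∀ i, ∀ j' ≤ N.L i, N.Y i ≠ N.S i j' := by
    intro i j' hj' h
    obtain ⟨α, -, hS, hY, -⟩ := hpart i
    exact hY (h ▸ hS j' hj')
  constructor
  · intro x hx m hm z hz ℓ hℓ hcoeff
    have hd : (∑ i, Finsupp.single (z i) 1 : σ →₀ ℕ) ∈ (N.deriv k ℓ x).support :=
      MvPolynomial.mem_support_iff.mpr hcoeff
    rcases key x ℓ hℓ _ hd with ⟨i, j, hY, hS⟩ | ⟨i, j, hU⟩
    · obtain ⟨i₁, hi₁⟩ := mem_support_sum_single hY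
      obtain ⟨i₂, hi₂⟩ := mem_support_sum_single hS
      have hne : i₁ ≠ i₂ := by
        intro h
        exact hYS i j (le_of_lt j.2) (by rw [← hi₁, h, hi₂])
      rcases lt_or_gt_of_ne hne with hlt | hlt
      · exact ⟨i₁, i₂, hlt, i, j, Or.inl ⟨hi₁, hi₂⟩⟩
      · exact ⟨i₂, i₁, hlt, i, j, Or.inr ⟨hi₁, hi₂⟩⟩
    · obtain ⟨i₀, hi₀⟩ := mem_support_sum_single hU
      exact absurd ⟨i, j, hi₀⟩ (hz i₀)
  · intro x hx z hz m hm ℓ hℓ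
    by_contra hcoeff
    have hd : (Finsupp.single z m : σ →₀ ℕ) ∈ (N.deriv k ℓ x).support :=
      MvPolynomial.mem_support_iff.mpr hcoeff
    rcases key x ℓ hℓ _ hd with ⟨i, j, hY, hS⟩ | ⟨i, j, hU⟩
    · have h₁ : z = N.Y i := (((Finsupp.mem_support_single _ _ _).mp hY).1).symm
      have h₂ : z = N.S i (j : ℕ) := (((Finsupp.mem_support_single _ _ _).mp hS).1).symm
      exact hYS i j (le_of_lt j.2) (h₁ ▸ h₂)
    · exact hz ⟨i, j, (((Finsupp.mem_support_single _ _ _).mp hU).1).symm⟩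

end A1Network
end
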